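/- arXiv:1806.06442 — 2 statements merged into one kernel-verified Lean document; each statement's English description precedes it below -/
import Mathlib

section
/- Let X be a normed vector space, f : X → ℝ ∪ {+∞} convex, x ∈ X with f(x) > 0, τ > 0 and q ∈ (0,1]. If τ · d(x, [f ≤ 0]) ≤ f(x)^q, then every subgradient x* ∈ ∂f(x) satisfies ‖x*‖ ≥ max{ τ · f(x)^{1−q}, τ^{1/q} · d(x, [f ≤ 0])^{1/q − 1} }. -/
open EMetric ENNReal

/-- Convexity for an `EReal`-valued function (modelling `f : X → ℝ ∪ {+∞}`). -/
def EConvexOn {X : Type*} [NormedAddCommGroup X] [NormedSpace ℝ X]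
    (f : X → EReal) : Prop :=
  ∀ u v : X, ∀ t : ℝ, 0 ≤ t → t ≤ 1 →
    f (t • u + (1 - t) • v) ≤ (t : EReal) * f u + ((1 - t : ℝ) : EReal) * f v

/-- The (convex) subdifferential of `f` at `x`. -/
def ESubdiff {X : Type*} [NormedAddCommGroup X] [NormedSpace ℝ X]
    (f : X → EReal) (x : X) : Set (X →L[ℝ] ℝ) :=
  {g | ∀ u : X, ((g (u - x) : ℝ) : EReal) ≤ f u - f x}

/-- The "positive part" of an extended real, as an element of `[0, +∞]`. -/
noncomputable def EReal.toENN (a : EReal) : ℝ≥0∞ :=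
  if a = ⊤ then ⊤ else ENNReal.ofReal a.toReal

/-- `d(0, ∂f(x)) = inf {‖x*‖ : x* ∈ ∂f(x)}`, `+∞` if `∂f(x) = ∅`. -/
noncomputable def dSub {X : Type*} [NormedAddCommGroup X] [NormedSpace ℝ X]
    (f : X → EReal) (x : X) : ℝ≥0∞ :=
  ⨅ g ∈ ESubdiff f x, ENNReal.ofReal ‖g‖

/-! The subgradient inequality at a point `u` of `[f ≤ 0]` gives `f x ≤ ‖x*‖ ‖u - x‖`, hence
`f x ≤ ‖x*‖ d(x, [f ≤ 0])`. Combining this with the error bound `τ d(x, [f ≤ 0]) ≤ f(x)^q`,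
eliminating either `d(x, [f ≤ 0])` or `f x`, gives the two lower bounds. -/

theorem EReal.toENN_ne_top {a : EReal} (ha : a ≠ ⊤) : a.toENN ≠ ⊤ := by
  simp [EReal.toENN, ha]

theorem EReal.toENN_pos {a : EReal} (ha : 0 < a) : 0 < a.toENN := by
  induction a using EReal.rec with
  | bot => exact absurd ha (not_lt.2 bot_le)
  | coe r => simpa [EReal.toENN] using ha
  | top => simp [EReal.toENN]

section Subgradient

variable {X : Type*} [NormedAddCommGroup X] [NormedSpace ℝ X] {f : X → EReal} {x : X}
  {g : X →L[ℝ] ℝ}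

theorem ne_top_of_mem_ESubdiff (hg : g ∈ ESubdiff f x) : f x ≠ ⊤ := by
  intro h
  simpa [h, EReal.sub_top] using hg x

theorem toENN_le_mul_edist_of_mem_ESubdiff (hg : g ∈ ESubdiff f x) {u : X} (hu : f u ≤ 0) :
    (f x).toENN ≤ ENNReal.ofReal ‖g‖ * edist x u := by
  have hgu := hg u
  induction hfx : f x using EReal.rec with
  | bot => simp [EReal.toENN]
  | top => exact absurd hfx (ne_top_of_mem_ESubdiff hg)
  | coe r =>
    induction hfu : f u using EReal.rec with
    | bot =>
      rw [hfu, EReal.bot_sub, le_bot_iff] at hgu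
      exact absurd hgu (EReal.coe_ne_bot _)
    | top => exact absurd (hfu ▸ hu) (by simp)
    | coe s =>
      rw [hfx, hfu, ← EReal.coe_sub, EReal.coe_le_coe_iff] at hgu
      have hs : s ≤ 0 := by rw [hfu] at hu; exact_mod_cast hu
      have hr : r ≤ ‖g‖ * dist x u := calc
        r ≤ -g (u - x) := by linarith
        _ ≤ ‖g (u - x)‖ := neg_le_abs _
        _ ≤ ‖g‖ * ‖u - x‖ := g.le_opNorm _
        _ = ‖g‖ * dist x u := by rw [dist_eq_norm']
      simpa [EReal.toENN, edist_dist, ← ENNReal.ofReal_mul (norm_nonneg g)] using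
        ENNReal.ofReal_le_ofReal hr

end Subgradient

theorem Metric.le_mul_infEDist {α : Type*} [PseudoEMetricSpace α] {a c : ℝ≥0∞} {x : α}
    {s : Set α} (hc : c ≠ ⊤) (hs : s.Nonempty) (h : ∀ y ∈ s, a ≤ c * edist x y) :
    a ≤ c * infEDist x s := by
  have : Nonempty s := hs.to_subtype
  rw [infEDist, iInf_subtype', ENNReal.mul_iInf (by simp [hc])]
  exact le_iInf fun y ↦ h y y.2

namespace ENNReal

variable {a t E G : ℝ≥0∞} {q : ℝ}

theorem mul_rpow_one_sub_le (ha₀ : a ≠ 0) (ha : a ≠ ⊤) (hE : E ≠ ⊤)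
    (hEB : t * E ≤ a ^ q) (hG : a ≤ G * E) : t * a ^ (1 - q) ≤ G := by
  have hE₀ : E ≠ 0 := by rintro rfl; simp_all
  rw [← ENNReal.mul_le_mul_iff_left hE₀ hE]
  calc t * a ^ (1 - q) * E = t * E * a ^ (1 - q) := by ring
    _ ≤ a ^ q * a ^ (1 - q) := by gcongr
    _ = a := by rw [← ENNReal.rpow_add _ _ ha₀ ha]; simp
    _ ≤ G * E := hG

theorem rpow_one_div_mul_rpow_sub_le (hq : 0 < q) (ha₀ : a ≠ 0) (hE : E ≠ ⊤)
    (hEB : t * E ≤ a ^ q) (hG : a ≤ G * E) : t ^ (1 / q) * E ^ (1 / q - 1) ≤ G := by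
  have hE₀ : E ≠ 0 := by rintro rfl; simp_all
  rw [← ENNReal.mul_le_mul_iff_left hE₀ hE]
  calc t ^ (1 / q) * E ^ (1 / q - 1) * E = t ^ (1 / q) * E ^ (1 / q) := by
        rw [mul_assoc]
        nth_rw 2 [← ENNReal.rpow_one E]
        rw [← ENNReal.rpow_add _ _ hE₀ hE, sub_add_cancel]
    _ = (t * E) ^ (1 / q) := (ENNReal.mul_rpow_of_nonneg _ _ (by positivity)).symm
    _ ≤ (a ^ q) ^ (1 / q) := by gcongr
    _ = a := by rw [← ENNReal.rpow_mul, mul_one_div_cancel hq.ne', ENNReal.rpow_one]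
    _ ≤ G * E := hG

end ENNReal

theorem stmt_1_general {X : Type*} [NormedAddCommGroup X] [NormedSpace ℝ X]
    (f : X → EReal)
    (x : X) (hx : 0 < f x) (τ q : ℝ) (hτ : 0 < τ) (hq0 : 0 < q)
    (hEB : ENNReal.ofReal τ * EMetric.infEdist x {u | f u ≤ 0} ≤ (f x).toENN ^ q) :
    ∀ g ∈ ESubdiff f x,
      max (ENNReal.ofReal τ * (f x).toENN ^ (1 - q))
          ((ENNReal.ofReal τ) ^ (1 / q) *
            (EMetric.infEdist x {u | f u ≤ 0}) ^ (1 / q - 1))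
        ≤ ENNReal.ofReal ‖g‖ := by
  intro g hg
  have ha₀ : (f x).toENN ≠ 0 := (EReal.toENN_pos hx).ne'
  have ha : (f x).toENN ≠ ⊤ := EReal.toENN_ne_top (ne_top_of_mem_ESubdiff hg)
  have hE : Metric.infEDist x {u | f u ≤ 0} ≠ ⊤ := by
    intro hE
    rw [EMetric.infEdist, hE, ENNReal.mul_top (by simpa using hτ)] at hEB
    exact ENNReal.rpow_ne_top_of_nonneg hq0.le ha (top_le_iff.1 hEB)
  have hS : {u | f u ≤ 0}.Nonempty :=
    Set.nonempty_iff_ne_empty.2 (Metric.infEDist_eq_top_iff.not.1 hE)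
  have hG := Metric.le_mul_infEDist ofReal_ne_top hS
    fun u hu ↦ toENN_le_mul_edist_of_mem_ESubdiff hg hu
  exact max_le (ENNReal.mul_rpow_one_sub_le ha₀ ha hE hEB hG)
    (ENNReal.rpow_one_div_mul_rpow_sub_le hq0 ha₀ hE hEB hG)

/-- if `f` is convex, `f(x) > 0`, `τ > 0`, `q ∈ (0,1]` and
`τ · d(x,[f ≤ 0]) ≤ f(x)^q`, then every `x* ∈ ∂f(x)` satisfies
`‖x*‖ ≥ max{ τ f(x)^{1−q}, τ^{1/q} d(x,[f≤0])^{1/q−1} }`. -/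
theorem stmt_1 {X : Type*} [NormedAddCommGroup X] [NormedSpace ℝ X]
    (f : X → EReal) (hbot : ∀ u, f u ≠ ⊥) (hconv : EConvexOn f)
    (x : X) (hx : 0 < f x) (τ q : ℝ) (hτ : 0 < τ) (hq0 : 0 < q) (hq1 : q ≤ 1)
    (hEB : ENNReal.ofReal τ * EMetric.infEdist x {u | f u ≤ 0} ≤ (f x).toENN ^ q) :
    ∀ g ∈ ESubdiff f x,
      max (ENNReal.ofReal τ * (f x).toENN ^ (1 - q))
          ((ENNReal.ofReal τ) ^ (1 / q) *
            (EMetric.infEdist x {u | f u ≤ 0}) ^ (1 / q - 1))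
        ≤ ENNReal.ofReal ‖g‖ :=
  stmt_1_general f x hx τ q hτ hq0 hEB
end

section
/- Let X be a Banach space, f : X → ℝ ∪ {+∞} convex lower semicontinuous, x̄ ∈ [f ≤ 0], τ > 0, δ ∈ (0,∞] and q ∈ (0,1]. If d(x, [f ≤ 0])^{q−1} · d(0, ∂f(x))^q ≥ τ for all x ∈ B_δ(x̄) with f(x) > 0 and f(x)^q < τ d(x, [f ≤ 0]), then for every α ∈ (0,1) and every x ∈ B_{δ/(1+α)}(x̄) one has α^q (1−α)^{1−q} τ d(x, [f ≤ 0]) ≤ (f₊(x))^q. -/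
open EMetric ENNReal

/-!
Let `r = f x > 0` and `D = d(x, [f ≤ 0]) > 0`. Ekeland's principle for `f₊` with slope
`κ = r / (α D)` gives a point `z` with `f₊ z + κ d(z, x) ≤ r` minimising `f₊ + κ d(·, z)`.
Then `d(z, x) ≤ α D`, so `z` lies in `B_δ(x̄)` and outside `[f ≤ 0]`; lower semicontinuity and
convexity make `z` a global minimum of `f + κ ‖· - z‖`, and separating the epigraph of `f` from
the open hypograph of `f z - κ ‖· - z‖` yields a subgradient of norm at most `κ` at `z`.
Since `d(z, [f ≤ 0]) ≥ D (1 - α + α f(z) / r)`, either the hypothesis applies at `z` and bounds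
`τ` by `d(z, [f ≤ 0])^(q-1) κ^q`, or `f(z)^q ≥ τ d(z, [f ≤ 0])` and weighted AM–GM concludes.
-/

open Filter Topology

lemma Set.Nonempty.exists_mem_forall_le_add {α : Type*} {A : Set α} (hA : A.Nonempty)
    (F : α → ℝ≥0∞) {ε : ℝ≥0∞} (hε : ε ≠ 0) : ∃ u ∈ A, ∀ w ∈ A, F u ≤ F w + ε := by
  by_cases htop : ⨅ w ∈ A, F w = ⊤
  · obtain ⟨u, hu⟩ := hA
    refine ⟨u, hu, fun w hw => ?_⟩
    simp [top_le_iff.1 (htop ▸ iInf₂_le w hw)]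
  · obtain ⟨u, hlt⟩ := iInf_lt_iff.1 (ENNReal.lt_add_right htop hε)
    obtain ⟨hu, hlt⟩ := iInf_lt_iff.1 hlt
    exact ⟨u, hu, fun w hw => hlt.le.trans (by gcongr; exact iInf₂_le w hw)⟩

section Ekeland

variable {X : Type*} [PseudoEMetricSpace X] {F : X → ℝ≥0∞} {κ : ℝ≥0∞}

lemma ekeland_trans {u v w : X} (huv : F u + κ * edist u v ≤ F v)
    (hvw : F v + κ * edist v w ≤ F w) : F u + κ * edist u w ≤ F w :=
  calc F u + κ * edist u w ≤ (F u + κ * edist u v) + κ * edist v w := by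
        rw [add_assoc, ← mul_add]; gcongr; exact edist_triangle _ _ _
    _ ≤ F w := by grw [huv]; exact hvw

lemma ekeland_chain {x : ℕ → X} (hx : ∀ n, F (x (n + 1)) + κ * edist (x (n + 1)) (x n) ≤ F (x n))
    {m n : ℕ} (hnm : n ≤ m) : F (x m) + κ * edist (x m) (x n) ≤ F (x n) := by
  induction m, hnm using Nat.le_induction with
  | base => simp
  | succ m _ ih => exact ekeland_trans (hx m) ih

lemma cauchySeq_of_ekeland_chain {x : ℕ → X}
    (hx : ∀ n, F (x (n + 1)) + κ * edist (x (n + 1)) (x n) ≤ F (x n)) (h0 : F (x 0) ≠ ⊤)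
    (hκ0 : κ ≠ 0) (hκ : κ ≠ ⊤) : CauchySeq x := by
  set l := ⨅ n, F (x n)
  have hl : l ≠ ⊤ := ne_top_of_le_ne_top h0 (iInf_le _ 0)
  refine EMetric.cauchySeq_iff'.2 fun ε hε => ?_
  obtain ⟨N, hN⟩ := iInf_lt_iff.1 (ENNReal.lt_add_right hl (mul_ne_zero hκ0 hε.ne'))
  refine ⟨N, fun n hn => (ENNReal.mul_lt_mul_iff_right hκ0 hκ).1 <|
    (ENNReal.add_lt_add_iff_left hl).1 ?_⟩
  calc l + κ * edist (x n) (x N) ≤ F (x n) + κ * edist (x n) (x N) := by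
        gcongr; exact iInf_le _ n
    _ ≤ F (x N) := ekeland_chain hx hn
    _ < l + κ * ε := hN

theorem LowerSemicontinuous.exists_ekeland [CompleteSpace X] (hF : LowerSemicontinuous F)
    {x : X} (hx : F x ≠ ⊤) (hκ0 : κ ≠ 0) (hκ : κ ≠ ⊤) :
    ∃ z, F z + κ * edist z x ≤ F x ∧ ∀ u, F z ≤ F u + κ * edist u z := by
  choose! next hnext hnext_min using fun (n : ℕ) (v : X) =>
    Set.Nonempty.exists_mem_forall_le_add (A := {u | F u + κ * edist u v ≤ F v})
      ⟨v, by simp⟩ F (ε := 2⁻¹ ^ n) (by simp)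
  set seq : ℕ → X := fun n => Nat.rec x next n
  have hstep : ∀ n, F (seq (n + 1)) + κ * edist (seq (n + 1)) (seq n) ≤ F (seq n) :=
    fun n => hnext n (seq n)
  obtain ⟨z, hz⟩ := cauchySeq_tendsto_of_complete (cauchySeq_of_ekeland_chain hstep hx hκ0 hκ)
  have hzn : ∀ n, F z + κ * edist z (seq n) ≤ F (seq n) := fun n =>
    have hlsc : LowerSemicontinuous fun u => F u + κ * edist u (seq n) :=
      hF.add ((ENNReal.continuous_const_mul hκ).comp
        (continuous_id.edist continuous_const)).lowerSemicontinuous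
    (hlsc.isClosed_preimage (F (seq n))).mem_of_tendsto hz
      (eventually_atTop.2 ⟨n, fun m hm => ekeland_chain hstep hm⟩)
  refine ⟨z, hzn 0, fun u => le_of_not_gt fun hlt => ?_⟩
  have hzu : ∀ n : ℕ, F z ≤ F u + 2⁻¹ ^ n := fun n =>
    le_self_add.trans <| (hzn (n + 1)).trans <| hnext_min n (seq n) u (ekeland_trans hlt.le (hzn n))
  have : F z ≤ F u := ENNReal.le_of_forall_pos_le_add fun ε hε _ => by
    obtain ⟨n, hn⟩ := ENNReal.exists_inv_two_pow_lt (ENNReal.coe_ne_zero.2 hε.ne')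
    exact (hzu n).trans (by gcongr)
  exact hlt.not_ge (this.trans le_self_add)

end Ekeland

section Convex

variable {X : Type*} [NormedAddCommGroup X] [NormedSpace ℝ X] {f : X → EReal}

lemma EConvexOn.le_coe (hconv : EConvexOn f) {u v : X} {a b t : ℝ} (hu : f u = a) (hv : f v = b)
    (ht0 : 0 ≤ t) (ht1 : t ≤ 1) : f (t • u + (1 - t) • v) ≤ ↑(t * a + (1 - t) * b) := by
  have h := hconv u v t ht0 ht1
  rwa [hu, hv, ← EReal.coe_mul, ← EReal.coe_mul, ← EReal.coe_add] at h

lemma EConvexOn.convex_epigraph (hconv : EConvexOn f) : Convex ℝ {p : X × ℝ | f p.1 ≤ p.2} := by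
  rintro ⟨u, s⟩ hu ⟨v, t⟩ hv a b ha hb hab
  obtain rfl : b = 1 - a := by linarith
  calc f (a • u + (1 - a) • v) ≤ (a : EReal) * f u + ((1 - a : ℝ) : EReal) * f v :=
        hconv u v a ha (by linarith)
    _ ≤ (a : EReal) * s + ((1 - a : ℝ) : EReal) * t :=
        add_le_add (mul_le_mul_of_nonneg_left hu (by exact_mod_cast ha))
          (mul_le_mul_of_nonneg_left hv (by exact_mod_cast hb))
    _ = (a • (u, s) + (1 - a) • (v, t)).2 := by
        simp only [Prod.snd_add, Prod.smul_snd, smul_eq_mul, EReal.coe_add, EReal.coe_mul]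

lemma convex_setOf_lt_sub_mul_norm (z : X) {K : ℝ} (hK : 0 ≤ K) (b : ℝ) :
    Convex ℝ {p : X × ℝ | p.2 < b - K * ‖p.1 - z‖} := by
  have hnorm : ConvexOn ℝ Set.univ (fun p : X × ℝ => ‖p.1 - z‖) := by
    simpa [Function.comp_def, sub_eq_neg_add] using
      ((convexOn_univ_norm (E := X)).translate_right (-z)).comp_linearMap (LinearMap.fst ℝ X ℝ)
  have hconv : ConvexOn ℝ Set.univ (fun p : X × ℝ => p.2 + K * ‖p.1 - z‖) :=
    (LinearMap.snd ℝ X ℝ).convexOn convex_univ |>.add (hnorm.smul hK)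
  simpa [lt_sub_iff_add_lt] using hconv.convex_lt b

lemma ContinuousLinearMap.norm_le_of_forall_apply_le (g : X →L[ℝ] ℝ) {K : ℝ} (hK : 0 ≤ K)
    (h : ∀ v, g v ≤ K * ‖v‖) : ‖g‖ ≤ K :=
  g.opNorm_le_bound hK fun v => abs_le.2
    ⟨by simpa using neg_le_neg (h (-v)), h v⟩

lemma EConvexOn.exists_mem_eSubdiff_norm_le (hconv : EConvexOn f) {z : X} {b K : ℝ}
    (hfz : f z = b) (hK : 0 ≤ K) (hmin : ∀ u, f z ≤ f u + ↑(K * ‖u - z‖)) :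
    ∃ g ∈ ESubdiff f z, ‖g‖ ≤ K := by
  have hdisj : Disjoint {p : X × ℝ | p.2 < b - K * ‖p.1 - z‖} {p : X × ℝ | f p.1 ≤ p.2} := by
    refine Set.disjoint_left.2 fun ⟨u, t⟩ hC hE => (hmin u).not_gt ?_
    calc f u + ↑(K * ‖u - z‖) ≤ ↑(t + K * ‖u - z‖) := by
          rw [EReal.coe_add]; gcongr; exact hE
      _ < f z := by rw [hfz]; exact_mod_cast (lt_sub_iff_add_lt.1 hC)
  obtain ⟨φ, c, hφC, hφE⟩ := geometric_hahn_banach_open (convex_setOf_lt_sub_mul_norm z hK b)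
    (isOpen_lt continuous_snd (by fun_prop)) hconv.convex_epigraph hdisj
  set g₀ : X →L[ℝ] ℝ := φ.comp (ContinuousLinearMap.inl ℝ X ℝ)
  set s₀ : ℝ := φ (0, 1)
  have hφ : ∀ u t, φ (u, t) = g₀ u + t * s₀ := fun u t => by
    have h := φ.map_smul t ((0 : X), (1 : ℝ))
    simp only [Prod.smul_mk, smul_zero, smul_eq_mul, mul_one] at h
    rw [← φ.comp_inl_add_comp_inr]
    simp [g₀, s₀, h]
  have hE : ∀ u (t : ℝ), f u ≤ t → c ≤ g₀ u + t * s₀ := fun u t h => hφ u t ▸ hφE (u, t) h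
  have hC : ∀ u t, t < b - K * ‖u - z‖ → g₀ u + t * s₀ < c := fun u t h => hφ u t ▸ hφC (u, t) h
  have hcz : c ≤ g₀ z + b * s₀ := hE z b hfz.le
  have hs₀ : 0 < s₀ := by nlinarith [hC z (b - 1) (by simp)]
  have hC' : ∀ u, g₀ u + (b - K * ‖u - z‖) * s₀ ≤ c := fun u => by
    have : b - K * ‖u - z‖ ≤ (c - g₀ u) / s₀ := le_of_forall_lt fun t ht => by
      rw [lt_div_iff₀ hs₀]; linarith [hC u t ht]
    rw [le_div_iff₀ hs₀] at this; linarith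
  have hcz' : g₀ z + b * s₀ ≤ c := by simpa using hC' z
  have hg : ∀ v, (-s₀⁻¹ • g₀) v = -g₀ v / s₀ := fun v => by
    simp [div_eq_inv_mul]
  refine ⟨-s₀⁻¹ • g₀, fun u => ?_, ?_⟩
  · have hu : f u ≠ ⊥ := fun h => by simpa [h, hfz] using hmin u
    rcases eq_or_ne (f u) ⊤ with htop | htop
    · simp [htop, hfz]
    obtain ⟨a, ha⟩ : ∃ a : ℝ, f u = a := ⟨_, (EReal.coe_toReal htop hu).symm⟩
    rw [ha, hfz, ← EReal.coe_sub, EReal.coe_le_coe_iff, hg, map_sub, div_le_iff₀ hs₀]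
    linarith [hE u a ha.le]
  · refine ContinuousLinearMap.norm_le_of_forall_apply_le _ hK fun v => ?_
    have := hC' (z - v)
    simp only [sub_sub_cancel_left, norm_neg, map_sub] at this
    rw [hg, div_le_iff₀ hs₀]
    linarith

end Convex

section ConvexEkeland

variable {X : Type*} [NormedAddCommGroup X] [NormedSpace ℝ X] {f : X → EReal}

lemma EConvexOn.le_add_mul_norm_of_eventually (hconv : EConvexOn f) (hbot : ∀ u, f u ≠ ⊥)
    {z : X} {b K : ℝ} (hfz : f z = b) (hloc : ∀ᶠ u in 𝓝 z, f z ≤ f u + ↑(K * ‖u - z‖))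
    (u : X) : f z ≤ f u + ↑(K * ‖u - z‖) := by
  rcases eq_or_ne (f u) ⊤ with htop | htop
  · rw [htop, EReal.top_add_coe]; exact le_top
  obtain ⟨a, ha⟩ : ∃ a : ℝ, f u = a := ⟨_, (EReal.coe_toReal htop (hbot u)).symm⟩
  have hpath : Tendsto (fun t : ℝ => t • u + (1 - t) • z) (𝓝[>] 0) (𝓝 z) := by
    have : Continuous fun t : ℝ => t • u + (1 - t) • z := by fun_prop
    simpa using (this.tendsto 0).mono_left nhdsWithin_le_nhds
  obtain ⟨t, hzt, ht0, ht1⟩ := ((hpath.eventually hloc).and (Ioc_mem_nhdsGT one_pos)).exists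
  have hsub : t • u + (1 - t) • z - z = t • (u - z) := by module
  have hseg : b ≤ t * a + (1 - t) * b + K * (t * ‖u - z‖) := by
    have := hzt.trans (add_le_add_left (hconv.le_coe ha hfz ht0.le ht1) _)
    rwa [hfz, hsub, norm_smul, Real.norm_of_nonneg ht0.le, ← EReal.coe_add,
      EReal.coe_le_coe_iff] at this
  rw [ha, hfz, ← EReal.coe_add, EReal.coe_le_coe_iff]
  exact le_of_mul_le_mul_left (by linarith) ht0

lemma EReal.le_add_coe_of_toENNReal_le {a b : EReal} {c : ℝ} (hb : 0 ≤ b) (hc : 0 ≤ c)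
    (h : a.toENNReal ≤ b.toENNReal + ENNReal.ofReal c) : a ≤ b + c := by
  have := EReal.coe_ennreal_le_coe_ennreal_iff.2 h
  rw [EReal.coe_ennreal_add, EReal.coe_toENNReal hb, EReal.coe_ennreal_ofReal,
    max_eq_left hc, EReal.coe_toENNReal_eq_max] at this
  exact le_max_right _ _ |>.trans this

lemma EConvexOn.dSub_le_of_forall_toENNReal_le (hconv : EConvexOn f) (hbot : ∀ u, f u ≠ ⊥)
    (hlsc : LowerSemicontinuous f) {z : X} {b κ : ℝ} (hfz : f z = b) (hb : 0 < b) (hκ : 0 ≤ κ)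
    (hmin : ∀ u, (f z).toENNReal ≤ (f u).toENNReal + ENNReal.ofReal κ * edist u z) :
    dSub f z ≤ ENNReal.ofReal κ := by
  have hloc : ∀ᶠ u in 𝓝 z, f z ≤ f u + ↑(κ * ‖u - z‖) := by
    filter_upwards [hlsc z 0 (show 0 < f z by rw [hfz]; exact_mod_cast hb)] with u hu
    refine EReal.le_add_coe_of_toENNReal_le hu.le (by positivity) ?_
    rw [ENNReal.ofReal_mul hκ, ← dist_eq_norm, ← edist_dist]
    exact hmin u
  obtain ⟨g, hg, hgκ⟩ := hconv.exists_mem_eSubdiff_norm_le hfz hκ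
    (hconv.le_add_mul_norm_of_eventually hbot hfz hloc)
  exact (iInf₂_le g hg).trans (ENNReal.ofReal_le_ofReal hgκ)

lemma EConvexOn.exists_dSub_le_of_lt_mul_infDist [CompleteSpace X] (hconv : EConvexOn f)
    (hbot : ∀ u, f u ≠ ⊥) (hlsc : LowerSemicontinuous f) {x : X} {r κ : ℝ} (hfx : f x = r)
    (hr : 0 < r) (hκ : 0 < κ) (hrκ : r < κ * Metric.infDist x {v | f v ≤ 0}) :
    ∃ z : X, ∃ s : ℝ, f z = s ∧ 0 < s ∧ s + κ * dist z x ≤ r ∧ dSub f z ≤ ENNReal.ofReal κ := by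
  have hF : LowerSemicontinuous fun u => (f u).toENNReal :=
    EReal.continuous_toENNReal.comp_lowerSemicontinuous hlsc
      fun _ _ h => EReal.toENNReal_le_toENNReal h
  obtain ⟨z, hdesc, hmin⟩ := hF.exists_ekeland (x := x) (by simp [hfx])
    (κ := ENNReal.ofReal κ) (by simpa using hκ) ENNReal.ofReal_ne_top
  rw [hfx, EReal.real_coe_toENNReal, edist_dist, ← ENNReal.ofReal_mul hκ.le] at hdesc
  have hdist : κ * dist z x ≤ r := (ENNReal.ofReal_le_ofReal_iff hr.le).1 (le_add_self.trans hdesc)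
  have hz : 0 < f z := by
    have : z ∉ {v | f v ≤ 0} := Metric.notMem_of_dist_lt_infDist <| by
      rw [dist_comm]; exact lt_of_mul_lt_mul_left (hdist.trans_lt hrκ) hκ.le
    simpa using this
  have htop : f z ≠ ⊤ := fun h => by simp [h] at hdesc
  obtain ⟨s, hfz⟩ : ∃ s : ℝ, f z = s := ⟨_, (EReal.coe_toReal htop (hbot z)).symm⟩
  have hs : 0 < s := by rw [hfz] at hz; exact_mod_cast hz
  refine ⟨z, s, hfz, hs, ?_, hconv.dSub_le_of_forall_toENNReal_le hbot hlsc hfz hs hκ.le hmin⟩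
  rw [hfz, EReal.real_coe_toENNReal, ← ENNReal.ofReal_add hs.le (by positivity)] at hdesc
  exact (ENNReal.ofReal_le_ofReal_iff hr.le).1 hdesc

end ConvexEkeland

section ErrorBound

variable {α q τ r s D Dz E : ℝ}

lemma rpow_mul_one_sub_rpow_mul_rpow_le (hα0 : 0 ≤ α) (hα1 : α ≤ 1) (hq0 : 0 ≤ q) (hq1 : q ≤ 1)
    {u : ℝ} (hu : 0 ≤ u) : α ^ q * (1 - α) ^ (1 - q) * u ^ q ≤ 1 - α + α * u :=
  calc α ^ q * (1 - α) ^ (1 - q) * u ^ q = (α * u) ^ q * (1 - α) ^ (1 - q) := by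
        rw [Real.mul_rpow hα0 hu]; ring
    _ ≤ q * (α * u) + (1 - q) * (1 - α) :=
        Real.geom_mean_le_arith_mean2_weighted hq0 (by linarith) (by positivity) (by linarith)
          (by ring)
    _ ≤ 1 - α + α * u := by nlinarith [mul_nonneg hα0 hu]

lemma le_of_ekeland_descent (hα : 0 < α) (hr : 0 < r) (hD : 0 < D)
    (hdesc : s + r / (α * D) * E ≤ r) (htri : D ≤ Dz + E) :
    D * (1 - α + α * (s / r)) ≤ Dz := by
  have hE : E ≤ α * D * (r - s) / r := by
    rw [le_div_iff₀ hr, mul_comm E]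
    have := mul_le_mul_of_nonneg_left (by linarith : r / (α * D) * E ≤ r - s)
      (by positivity : 0 ≤ α * D)
    rwa [← mul_assoc, mul_div_cancel₀ _ (by positivity)] at this
  have : D * (1 - α + α * (s / r)) = D - α * D * (r - s) / r := by field_simp; ring
  linarith

lemma errorBound_of_slope (hα0 : 0 < α) (hα1 : α < 1) (hr : 0 < r) (hD : 0 < D)
    (hDz : (1 - α) * D ≤ Dz) (h : τ ≤ Dz ^ (q - 1) * (r / (α * D)) ^ q) (hq1 : q ≤ 1) :
    α ^ q * (1 - α) ^ (1 - q) * τ * D ≤ r ^ q := by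
  have h1α : 0 < 1 - α := by linarith
  have hmono : Dz ^ (q - 1) ≤ ((1 - α) * D) ^ (q - 1) :=
    Real.rpow_le_rpow_of_nonpos (by positivity) hDz (by linarith)
  have hid : α ^ q * (1 - α) ^ (1 - q) * (((1 - α) * D) ^ (q - 1) * (r / (α * D)) ^ q) * D
      = r ^ q := by
    rw [Real.mul_rpow h1α.le hD.le, Real.div_rpow hr.le (by positivity),
      Real.mul_rpow hα0.le hD.le, Real.rpow_sub_one h1α.ne', Real.rpow_sub_one hD.ne',
      Real.rpow_sub h1α, Real.rpow_one]
    field_simp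
  calc α ^ q * (1 - α) ^ (1 - q) * τ * D
      ≤ α ^ q * (1 - α) ^ (1 - q) * (((1 - α) * D) ^ (q - 1) * (r / (α * D)) ^ q) * D := by
        gcongr
        exact h.trans (by gcongr)
    _ = r ^ q := hid

lemma errorBound_of_value (hα0 : 0 < α) (hα1 : α < 1) (hq0 : 0 < q) (hq1 : q ≤ 1)
    (hτ : 0 ≤ τ) (hr : 0 < r) (hs : 0 < s) (hD : 0 ≤ D)
    (hDz : D * (1 - α + α * (s / r)) ≤ Dz) (h : τ * Dz ≤ s ^ q) :
    α ^ q * (1 - α) ^ (1 - q) * τ * D ≤ r ^ q := by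
  have hu : 0 < s / r := div_pos hs hr
  have hsq : s ^ q = (s / r) ^ q * r ^ q := by
    rw [← Real.mul_rpow hu.le hr.le, div_mul_cancel₀ _ hr.ne']
  refine le_of_mul_le_mul_left ?_ (Real.rpow_pos_of_pos hu q)
  calc (s / r) ^ q * (α ^ q * (1 - α) ^ (1 - q) * τ * D)
      = τ * D * (α ^ q * (1 - α) ^ (1 - q) * (s / r) ^ q) := by ring
    _ ≤ τ * D * (1 - α + α * (s / r)) := by
        gcongr
        exact rpow_mul_one_sub_rpow_mul_rpow_le hα0.le hα1.le hq0.le hq1 hu.le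
    _ ≤ τ * Dz := by rw [mul_assoc]; gcongr
    _ ≤ (s / r) ^ q * r ^ q := hsq ▸ h

/-- The quantitative core: `Dz` is the distance to the sublevel set from a point `z` with
`f z = s`, reached from a point with `f x = r` and distance `D` by an Ekeland descent of slope
`r / (α D)`, over a distance `E`. -/
lemma errorBound_of_ekeland_descent (hα0 : 0 < α) (hα1 : α < 1) (hq0 : 0 < q) (hq1 : q ≤ 1)
    (hτ : 0 ≤ τ) (hr : 0 < r) (hs : 0 < s) (hD : 0 < D)
    (hdesc : s + r / (α * D) * E ≤ r) (htri : D ≤ Dz + E)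
    (halt : τ ≤ Dz ^ (q - 1) * (r / (α * D)) ^ q ∨ τ * Dz ≤ s ^ q) :
    α ^ q * (1 - α) ^ (1 - q) * τ * D ≤ r ^ q := by
  have hDz := le_of_ekeland_descent hα0 hr hD hdesc htri
  rcases halt with h | h
  · refine errorBound_of_slope hα0 hα1 hr hD (le_trans ?_ hDz) h hq1
    nlinarith [mul_pos hα0 (div_pos hs hr)]
  · exact errorBound_of_value hα0 hα1 hq0 hq1 hτ hr hs hD.le hDz h

end ErrorBound

lemma ENNReal.le_rpow_mul_rpow_or_mul_le_rpow {τ q κ s d : ℝ} {m : ℝ≥0∞} (hτ : 0 ≤ τ)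
    (hq : 0 < q) (hd : 0 < d) (hs : 0 ≤ s) (hκ : 0 ≤ κ) (hm : m ≤ ENNReal.ofReal κ)
    (h : ENNReal.ofReal s ^ q < ENNReal.ofReal τ * ENNReal.ofReal d →
      ENNReal.ofReal τ ≤ ENNReal.ofReal d ^ (q - 1) * m ^ q) :
    τ ≤ d ^ (q - 1) * κ ^ q ∨ τ * d ≤ s ^ q := by
  rw [ENNReal.ofReal_rpow_of_nonneg hs hq.le, ← ENNReal.ofReal_mul hτ] at h
  by_cases hlt : ENNReal.ofReal (s ^ q) < ENNReal.ofReal (τ * d)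
  · left
    have := (h hlt).trans (mul_le_mul' le_rfl (ENNReal.rpow_le_rpow hm hq.le))
    rw [ENNReal.ofReal_rpow_of_pos hd, ENNReal.ofReal_rpow_of_nonneg hκ hq.le,
      ← ENNReal.ofReal_mul (by positivity)] at this
    exact (ENNReal.ofReal_le_ofReal_iff (by positivity)).1 this
  · exact .inr <| (ENNReal.ofReal_le_ofReal_iff (by positivity)).1 (not_lt.1 hlt)

lemma edist_lt_of_edist_le_mul {X : Type*} [PseudoEMetricSpace X] {x y z : X} {a δ : ℝ≥0∞}
    (hz : edist z x ≤ a * edist x y) (hx : edist x y < δ / (1 + a)) : edist z y < δ :=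
  calc edist z y ≤ edist z x + edist x y := edist_triangle _ _ _
    _ ≤ edist x y * (1 + a) := by grw [hz]; ring_nf; rfl
    _ < δ := ENNReal.mul_lt_of_lt_div hx

theorem stmt_18_general {X : Type*} [NormedAddCommGroup X] [NormedSpace ℝ X] [CompleteSpace X]
    (f : X → EReal) (hbot : ∀ u, f u ≠ ⊥) (hconv : EConvexOn f)
    (hlsc : LowerSemicontinuous f)
    (xbar : X) (hxbar : f xbar ≤ 0) (τ q : ℝ) (hτ : 0 < τ)
    (hq0 : 0 < q) (hq1 : q ≤ 1) (δ : ℝ≥0∞)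
    (h : ∀ x : X, edist x xbar < δ → 0 < f x →
      (f x).toENN ^ q < ENNReal.ofReal τ * EMetric.infEdist x {v | f v ≤ 0} →
      ENNReal.ofReal τ ≤
        (EMetric.infEdist x {v | f v ≤ 0}) ^ (q - 1) * (dSub f x) ^ q) :
    ∀ α : ℝ, 0 < α → α < 1 → ∀ x : X,
      edist x xbar < δ / (1 + ENNReal.ofReal α) →
      ENNReal.ofReal (α ^ q * (1 - α) ^ (1 - q) * τ) *
        EMetric.infEdist x {v | f v ≤ 0} ≤ (f x).toENN ^ q := by
  intro α hα0 hα1 x hx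
  set S : Set X := {v | f v ≤ 0}
  have hinf : ∀ y, EMetric.infEdist y S = ENNReal.ofReal (Metric.infDist y S) := fun y =>
    (ENNReal.ofReal_toReal (Metric.infEDist_ne_top ⟨xbar, hxbar⟩)).symm
  rw [hinf]
  set D := Metric.infDist x S
  rcases (Metric.infDist_nonneg : 0 ≤ D).eq_or_lt with hD | hD
  · simp [D, ← hD]
  rcases eq_or_ne (f x) ⊤ with htop | htop
  · simp [htop, EReal.toENN, ENNReal.top_rpow_of_pos hq0]
  obtain ⟨r, hfx⟩ : ∃ r : ℝ, f x = r := ⟨_, (EReal.coe_toReal htop (hbot x)).symm⟩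
  have hr : 0 < r := by
    have : x ∉ S := fun hxS => hD.ne' (Metric.infDist_zero_of_mem hxS)
    simpa [S, hfx] using this
  have hrκ : r < r / (α * D) * D := by
    rw [div_mul_eq_mul_div, mul_div_mul_right _ _ hD.ne', lt_div_iff₀ hα0]
    nlinarith
  obtain ⟨z, s, hfz, hs, hdesc, hsub⟩ :=
    hconv.exists_dSub_le_of_lt_mul_infDist hbot hlsc hfx hr (by positivity) hrκ
  have hzx : dist z x ≤ α * D := by
    refine le_of_mul_le_mul_left ?_ (by positivity : 0 < r / (α * D))
    rw [div_mul_cancel₀ _ (by positivity)]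
    linarith
  have hzball : edist z xbar < δ := by
    refine edist_lt_of_edist_le_mul (a := ENNReal.ofReal α) ?_ hx
    rw [edist_dist, edist_dist, ← ENNReal.ofReal_mul hα0.le]
    exact ENNReal.ofReal_le_ofReal (hzx.trans (by gcongr; exact Metric.infDist_le_dist_of_mem hxbar))
  have htri : D ≤ Metric.infDist z S + dist z x := by
    rw [dist_comm]; exact Metric.infDist_le_infDist_add_dist
  have halt := ENNReal.le_rpow_mul_rpow_or_mul_le_rpow hτ.le hq0 (by nlinarith) hs.le
    (by positivity) hsub (by simpa [← hinf, hfz, EReal.toENN] using h z hzball (by simp [hfz, hs]))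
  rw [hfx, EReal.toENN, if_neg (EReal.coe_ne_top r), EReal.toReal_coe,
    ENNReal.ofReal_rpow_of_pos hr, ← ENNReal.ofReal_mul (by positivity)]
  exact ENNReal.ofReal_le_ofReal
    (errorBound_of_ekeland_descent hα0 hα1 hq0 hq1 hτ.le hr hs hD hdesc htri halt)

/-- convex case of Theorem 3.9: if
`d(x,[f≤0])^{q−1} d(0,∂f(x))^q ≥ τ` for all `x ∈ B_δ(x̄)` with `f(x) > 0` and
`f(x)^q < τ d(x,[f≤0])`, then for every `α ∈ (0,1)` and `x ∈ B_{δ/(1+α)}(x̄)`,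
`α^q (1−α)^{1−q} τ d(x,[f≤0]) ≤ (f₊(x))^q`. Here `δ ∈ (0,∞]` and `q ∈ (0,1]`. -/
theorem stmt_18 {X : Type*} [NormedAddCommGroup X] [NormedSpace ℝ X] [CompleteSpace X]
    (f : X → EReal) (hbot : ∀ u, f u ≠ ⊥) (hconv : EConvexOn f)
    (hlsc : LowerSemicontinuous f)
    (xbar : X) (hxbar : f xbar ≤ 0) (τ q : ℝ) (hτ : 0 < τ)
    (hq0 : 0 < q) (hq1 : q ≤ 1) (δ : ℝ≥0∞) (hδ : 0 < δ)
    (h : ∀ x : X, edist x xbar < δ → 0 < f x →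
      (f x).toENN ^ q < ENNReal.ofReal τ * EMetric.infEdist x {v | f v ≤ 0} →
      ENNReal.ofReal τ ≤
        (EMetric.infEdist x {v | f v ≤ 0}) ^ (q - 1) * (dSub f x) ^ q) :
    ∀ α : ℝ, 0 < α → α < 1 → ∀ x : X,
      edist x xbar < δ / (1 + ENNReal.ofReal α) →
      ENNReal.ofReal (α ^ q * (1 - α) ^ (1 - q) * τ) *
        EMetric.infEdist x {v | f v ≤ 0} ≤ (f x).toENN ^ q :=
  stmt_18_general f hbot hconv hlsc xbar hxbar τ q hτ hq0 hq1 δ h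
end
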